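/- Let E : ℝ² → ℝ be twice continuously differentiable (C²) and let g : ℝ² → ℝ be continuously differentiable (C¹). For k ∈ {1,2,3}, let G be the vector field G(x,y,z) = g(x,y) · B. Then for every point p ∈ ℝ³ there exists a real scalar t such that [[f₀, f_k], G](p) = t · B; that is, the Lie bracket of [f₀, f_k] with any vector field of the form g·B is pointwise a scalar multiple of B. -/

import Mathlib

/-!
`f₀` is an affine field minus `E(x, y) • B`, so `[f₀, f k] = -Df₀ · (f k)` is a constant plus
`(∂E/∂(γ₁ₖ, γ₂ₖ))(x, y) • B`. The bracket of two fields `v + a • B` and `b • B` is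
`(Db · (v + a • B) - Da · (b • B)) • B`, which only needs `a` and `b` differentiable: this is
where `E ∈ C²` and `g ∈ C¹` enter.
-/

open VectorField

section LieBracket

variable {𝕜 : Type*} [NontriviallyNormedField 𝕜] {F : Type*} [NormedAddCommGroup F]
  [NormedSpace 𝕜 F]

theorem lieBracket_const_right (V : F → F) (c x : F) :
    lieBracket 𝕜 V (fun _ => c) x = -fderiv 𝕜 V x c := by
  simp [lieBracket]

theorem lieBracket_const_add_smul_smul {a b : F → 𝕜} {v B x : F}
    (ha : DifferentiableAt 𝕜 a x) (hb : DifferentiableAt 𝕜 b x) :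
    lieBracket 𝕜 (fun p => v + a p • B) (fun p => b p • B) x
      = (fderiv 𝕜 b x (v + a x • B) - fderiv 𝕜 a x (b x • B)) • B := by
  rw [lieBracket, (hb.hasFDerivAt.smul_const B).fderiv,
    ((ha.hasFDerivAt.smul_const B).const_add v).fderiv]
  simp [sub_smul, smul_smul]

end LieBracket

def projXY : ℝ × ℝ × ℝ →L[ℝ] ℝ × ℝ :=
  (ContinuousLinearMap.fst ℝ ℝ (ℝ × ℝ)).prod
    ((ContinuousLinearMap.fst ℝ ℝ ℝ).comp (ContinuousLinearMap.snd ℝ ℝ (ℝ × ℝ)))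

@[simp]
theorem projXY_apply (p : ℝ × ℝ × ℝ) : projXY p = (p.1, p.2.1) := rfl

noncomputable def driftLinearPart (β₁₁ β₁₃ β₂₂ β₃₂ β₃₃ : ℝ) : ℝ × ℝ × ℝ →L[ℝ] ℝ × ℝ × ℝ :=
  LinearMap.toContinuousLinearMap
    { toFun := fun p => (β₁₁ * p.1, β₂₂ * p.2.1 + β₁₃ * p.2.2, β₃₂ * p.2.1 + β₃₃ * p.2.2)
      map_add' := fun p q => by simp only [Prod.fst_add, Prod.snd_add, Prod.mk_add_mk]; ext <;> ring
      map_smul' := fun r p => by simp only [Prod.smul_fst, Prod.smul_snd, smul_eq_mul,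
        RingHom.id_apply, Prod.smul_mk]; ext <;> ring }

@[simp]
theorem driftLinearPart_apply (β₁₁ β₁₃ β₂₂ β₃₂ β₃₃ : ℝ) (p : ℝ × ℝ × ℝ) :
    driftLinearPart β₁₁ β₁₃ β₂₂ β₃₂ β₃₃ p
      = (β₁₁ * p.1, β₂₂ * p.2.1 + β₁₃ * p.2.2, β₃₂ * p.2.1 + β₃₃ * p.2.2) := rfl

theorem lieBracket_affine_sub_smul_const {E : ℝ × ℝ → ℝ} (hE : Differentiable ℝ E)
    (A : ℝ × ℝ × ℝ →L[ℝ] ℝ × ℝ × ℝ) (v B c : ℝ × ℝ × ℝ) :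
    lieBracket ℝ (fun p => v + A p - E (projXY p) • B) (fun _ => c)
      = fun p => -A c + fderiv ℝ E (projXY p) (projXY c) • B := by
  funext p
  have hV : HasFDerivAt (fun p => v + A p - E (projXY p) • B)
      (A - ((fderiv ℝ E (projXY p)).comp projXY).smulRight B) p :=
    (A.hasFDerivAt.const_add v).sub
      (((hE _).hasFDerivAt.comp p projXY.hasFDerivAt).smul_const B)
  rw [lieBracket_const_right, hV.fderiv]
  simp [sub_eq_neg_add]

theorem stmt4 (α₁ α₂ α₃ β₁₁ β₁₂ β₁₃ β₂₂ β₂₂' β₃₂ β₃₃ : ℝ)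
    (γ₁ γ₂ : Fin 3 → ℝ) (E : ℝ × ℝ → ℝ) (hE : ContDiff ℝ 2 E)
    (g : ℝ × ℝ → ℝ) (hg : ContDiff ℝ 1 g)
    (f₀ : ℝ × ℝ × ℝ → ℝ × ℝ × ℝ)
    (hf₀ : f₀ = fun p => (α₁ + β₁₁ * p.1 + β₁₂ * E (p.1, p.2.1),
      α₂ + β₂₂ * p.2.1 + β₂₂' * E (p.1, p.2.1) + β₁₃ * p.2.2,
      α₃ + β₃₂ * p.2.1 + β₃₃ * p.2.2))
    (f : Fin 3 → ℝ × ℝ × ℝ → ℝ × ℝ × ℝ)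
    (hf : f = fun j _ => (γ₁ j, γ₂ j, (0 : ℝ)))
    (B : ℝ × ℝ × ℝ) (hB : B = (-β₁₂, -β₂₂', (0 : ℝ)))
    (k : Fin 3)
    (G : ℝ × ℝ × ℝ → ℝ × ℝ × ℝ) (hG : G = fun q => g (q.1, q.2.1) • B) :
    ∀ p : ℝ × ℝ × ℝ, ∃ t : ℝ,
      lieBracket ℝ (lieBracket ℝ f₀ (f k)) G p = t • B := by
  intro p
  set A := driftLinearPart β₁₁ β₁₃ β₂₂ β₃₂ β₃₃
  set c : ℝ × ℝ × ℝ := (γ₁ k, γ₂ k, 0)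
  have hf₀_eq : f₀ = fun p => (α₁, α₂, α₃) + A p - E (projXY p) • B := by
    subst hf₀ hB
    funext q
    simp only [A, driftLinearPart_apply, projXY_apply, Prod.mk_add_mk, Prod.smul_mk,
      smul_eq_mul, Prod.mk_sub_mk]
    ext <;> ring
  have hE' : Differentiable ℝ (fderiv ℝ E) := (hE.fderiv_right le_rfl).differentiable one_ne_zero
  have hg' : Differentiable ℝ g := hg.differentiable one_ne_zero
  rw [show f k = fun _ => c by rw [hf], hf₀_eq,
    lieBracket_affine_sub_smul_const (hE.differentiable two_ne_zero),
    show G = fun q => g (projXY q) • B from hG, lieBracket_const_add_smul_smul (by fun_prop)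
      (by fun_prop)]
  exact ⟨_, rfl⟩
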